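/- Let f : R^d → R be L-smooth, x, δ ∈ R^d, and g a random vector with E[g] = ∇f(x+δ) and E[‖g − ∇f(x+δ)‖²] ≤ σ². Then for stepsize 0 < η ≤ 1/(2L) and any Δ ∈ R with ‖δ‖ ≤ Δ, E[f(x − η g)] ≤ f(x) − (η/2)‖∇f(x)‖² + L η² σ² + (η L²/2)Δ². -/

import Mathlib

/-!
The descent lemma `f y ≤ f x + ⟪∇f x, y - x⟫ + (L/2)‖y - x‖²`, applied at `y = x - η g` and
integrated, bounds `E f(x - η g)` by `f x - η⟪∇f x, G⟫ + (L η²/2) E‖g‖²`, where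
`G = ∇f(x + δ) = E g` and `E‖g‖² ≤ σ² + ‖G‖²`. Polarizing `⟪∇f x, G⟫` and using `L η ≤ 1` to absorb the `‖G‖²` terms
leaves `f x - (η/2)‖∇f x‖² + (η/2)‖∇f x - G‖² + (L η²/2)σ²`, and `‖∇f x - G‖ ≤ L‖δ‖ ≤ L Δ`.
-/

open MeasureTheory Set
open scoped RealInnerProductSpace

section

variable {E : Type*} [NormedAddCommGroup E] [InnerProductSpace ℝ E]

theorem neg_mul_inner_add_mul_norm_sq_le (a b : E) {L η : ℝ} (hη : 0 ≤ η) (hLη : L * η ≤ 1) :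
    -(η * ⟪a, b⟫) + L / 2 * η ^ 2 * ‖b‖ ^ 2 ≤ -(η / 2 * ‖a‖ ^ 2) + η / 2 * ‖a - b‖ ^ 2 := by
  have hshrink : 0 ≤ η * (1 - L * η) * ‖b‖ ^ 2 := by
    have := sub_nonneg.2 hLη
    positivity
  nlinarith [norm_sub_sq_real a b]

variable [CompleteSpace E] {f : E → ℝ} {L : ℝ}

theorem hasDerivAt_comp_add_smul (hf : Differentiable ℝ f) (x v : E) (t : ℝ) :
    HasDerivAt (fun t : ℝ => f (x + t • v)) ⟪gradient f (x + t • v), v⟫ t := by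
  have hline : HasDerivAt (fun t : ℝ => x + t • v) v t := by
    simpa using ((hasDerivAt_id t).smul_const v).const_add x
  exact (hf _).hasGradientAt.hasFDerivAt.comp_hasDerivAt t hline

theorem le_add_inner_gradient_add_sq (hf : Differentiable ℝ f)
    (hlip : ∀ x y, ‖gradient f x - gradient f y‖ ≤ L * ‖x - y‖) (x y : E) :
    f y ≤ f x + ⟪gradient f x, y - x⟫ + L / 2 * ‖y - x‖ ^ 2 := by
  set v := y - x
  -- Compare `t ↦ f (x + t • v) - t ⟪∇f x, v⟫` with `t ↦ f x + (L / 2) ‖v‖² t²` on `[0, 1]`.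
  have hφ : ∀ t : ℝ, HasDerivAt (fun t : ℝ => f (x + t • v) - t * ⟪gradient f x, v⟫)
      (⟪gradient f (x + t • v), v⟫ - ⟪gradient f x, v⟫) t := fun t =>
    (hasDerivAt_comp_add_smul hf x v t).sub (hasDerivAt_mul_const _)
  have hB : ∀ t : ℝ, HasDerivAt (fun t : ℝ => f x + L / 2 * ‖v‖ ^ 2 * t ^ 2)
      (L * ‖v‖ ^ 2 * t) t := fun t =>
    (((hasDerivAt_pow 2 t).const_mul (L / 2 * ‖v‖ ^ 2)).const_add (f x)).congr_deriv (by ring)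
  have hderiv_le : ∀ t ∈ Ico (0 : ℝ) 1,
      ⟪gradient f (x + t • v), v⟫ - ⟪gradient f x, v⟫ ≤ L * ‖v‖ ^ 2 * t := by
    rintro t ⟨ht, -⟩
    calc ⟪gradient f (x + t • v), v⟫ - ⟪gradient f x, v⟫
        = ⟪gradient f (x + t • v) - gradient f x, v⟫ := (inner_sub_left _ _ _).symm
      _ ≤ ‖gradient f (x + t • v) - gradient f x‖ * ‖v‖ := real_inner_le_norm _ _
      _ ≤ L * ‖t • v‖ * ‖v‖ := by
        gcongr
        simpa using hlip (x + t • v) x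
      _ = L * ‖v‖ ^ 2 * t := by rw [norm_smul, Real.norm_of_nonneg ht]; ring
  have hle := image_le_of_deriv_right_le_deriv_boundary
    (fun t _ => (hφ t).continuousAt.continuousWithinAt) (fun t _ => (hφ t).hasDerivWithinAt)
    (by simp) (fun t _ => (hB t).continuousAt.continuousWithinAt)
    (fun t _ => (hB t).hasDerivWithinAt) hderiv_le (right_mem_Icc.2 zero_le_one)
  simp only [one_smul, one_mul, one_pow, mul_one, v, add_sub_cancel] at hle
  linarith

theorem le_sub_inner_gradient_add_sq_of_step (hf : Differentiable ℝ f)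
    (hlip : ∀ x y, ‖gradient f x - gradient f y‖ ≤ L * ‖x - y‖) (x v : E) (η : ℝ) :
    f (x - η • v) ≤ f x - η * ⟪gradient f x, v⟫ + L / 2 * η ^ 2 * ‖v‖ ^ 2 := by
  have h := le_add_inner_gradient_add_sq hf hlip x (x - η • v)
  rw [sub_sub_cancel_left, inner_neg_right, real_inner_smul_right, norm_neg, norm_smul,
    Real.norm_eq_abs, mul_pow, sq_abs] at h
  linarith

variable {Ω : Type*} [MeasurableSpace Ω] {μ : Measure Ω}

theorem integrable_norm_sq_of_integrable_norm_sub_sq [IsFiniteMeasure μ] {F : Type*}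
    [NormedAddCommGroup F] {g : Ω → F} (hg : Integrable g μ) (c : F)
    (hc : Integrable (fun ω => ‖g ω - c‖ ^ 2) μ) : Integrable (fun ω => ‖g ω‖ ^ 2) μ := by
  have hsub : MemLp (fun ω => g ω - c) 2 μ :=
    (memLp_two_iff_integrable_sq_norm (hg.sub (integrable_const c)).aestronglyMeasurable).2 hc
  have hmem : MemLp g 2 μ := by simpa [Pi.add_def] using hsub.add (memLp_const c)
  exact (memLp_two_iff_integrable_sq_norm hg.aestronglyMeasurable).1 hmem

theorem integral_norm_sq_eq_integral_norm_sub_sq_add [IsProbabilityMeasure μ] {g : Ω → E}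
    (hg : Integrable g μ)
    (hg_sq : Integrable (fun ω => ‖g ω - ∫ ω', g ω' ∂μ‖ ^ 2) μ) :
    ∫ ω, ‖g ω‖ ^ 2 ∂μ = ∫ ω, ‖g ω - ∫ ω', g ω' ∂μ‖ ^ 2 ∂μ + ‖∫ ω, g ω ∂μ‖ ^ 2 := by
  set m := ∫ ω, g ω ∂μ
  have hcross : Integrable (fun ω => 2 * ⟪m, g ω - m⟫) μ :=
    ((hg.sub' (integrable_const m)).const_inner m).const_mul 2
  have hcross_zero : ∫ ω, 2 * ⟪m, g ω - m⟫ ∂μ = 0 := by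
    rw [integral_const_mul, integral_inner (hg.sub' (integrable_const m)),
      integral_sub hg (integrable_const m)]
    simp [m]
  calc ∫ ω, ‖g ω‖ ^ 2 ∂μ
      = ∫ ω, (‖m‖ ^ 2 + 2 * ⟪m, g ω - m⟫ + ‖g ω - m‖ ^ 2) ∂μ := by
        congr with ω
        rw [← norm_add_sq_real, add_sub_cancel]
    _ = _ := by
        rw [integral_add ((integrable_const _).fun_add hcross) hg_sq,
          integral_add (integrable_const _) hcross, hcross_zero]
        simp only [integral_const, probReal_univ, one_smul]
        ring

theorem integral_comp_sub_smul_le [IsProbabilityMeasure μ] {g : Ω → E} (hf : Differentiable ℝ f)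
    (hlip : ∀ x y, ‖gradient f x - gradient f y‖ ≤ L * ‖x - y‖) (x : E) (η : ℝ)
    (hg : Integrable g μ) (hg_sq : Integrable (fun ω => ‖g ω‖ ^ 2) μ)
    (hfg : Integrable (fun ω => f (x - η • g ω)) μ) :
    ∫ ω, f (x - η • g ω) ∂μ ≤
      f x - η * ⟪gradient f x, ∫ ω, g ω ∂μ⟫ + L / 2 * η ^ 2 * ∫ ω, ‖g ω‖ ^ 2 ∂μ := by
  have hinner : Integrable (fun ω => η * ⟪gradient f x, g ω⟫) μ :=
    (hg.const_inner _).const_mul η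
  calc ∫ ω, f (x - η • g ω) ∂μ
      ≤ ∫ ω, (f x - η * ⟪gradient f x, g ω⟫ + L / 2 * η ^ 2 * ‖g ω‖ ^ 2) ∂μ :=
        integral_mono hfg (((integrable_const (f x)).sub' hinner).fun_add (hg_sq.const_mul _))
          fun ω => le_sub_inner_gradient_add_sq_of_step hf hlip x (g ω) η
    _ = _ := by
        rw [integral_add ((integrable_const (f x)).sub' hinner) (hg_sq.const_mul _),
          integral_sub (integrable_const (f x)) hinner, integral_const_mul, integral_const_mul,
          integral_inner hg]
        simp

end

theorem descent_lemma_delta (d : ℕ) (f : EuclideanSpace ℝ (Fin d) → ℝ) (L σ η Δ : ℝ)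
    (hL : 0 < L) (hdiff : Differentiable ℝ f)
    (hlip : ∀ x y, ‖gradient f x - gradient f y‖ ≤ L * ‖x - y‖)
    {Ω : Type*} [MeasurableSpace Ω] (μ : Measure Ω) [IsProbabilityMeasure μ]
    (g : Ω → EuclideanSpace ℝ (Fin d)) (x δ : EuclideanSpace ℝ (Fin d))
    (hg_int : Integrable g μ)
    (hg_sq_int : Integrable (fun ω => ‖g ω - gradient f (x + δ)‖ ^ 2) μ)
    (hf_int : Integrable (fun ω => f (x - η • g ω)) μ)
    (hmean : ∫ ω, g ω ∂μ = gradient f (x + δ))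
    (hvar : ∫ ω, ‖g ω - gradient f (x + δ)‖ ^ 2 ∂μ ≤ σ ^ 2)
    (hη : 0 < η) (hη2 : η ≤ 1 / (2 * L)) (hΔ : ‖δ‖ ≤ Δ) :
    ∫ ω, f (x - η • g ω) ∂μ ≤
      f x - (η / 2) * ‖gradient f x‖ ^ 2 + L * η ^ 2 * σ ^ 2
        + (η * L ^ 2 / 2) * Δ ^ 2 := by
  have hLη : L * η ≤ 1 := by
    have := (le_div_iff₀ (by positivity : (0 : ℝ) < 2 * L)).1 hη2
    linarith
  have hbias : ‖gradient f x - gradient f (x + δ)‖ ^ 2 ≤ L ^ 2 * Δ ^ 2 := by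
    rw [← mul_pow]
    gcongr
    calc ‖gradient f x - gradient f (x + δ)‖ ≤ L * ‖x - (x + δ)‖ := hlip _ _
      _ ≤ L * Δ := by rw [sub_add_cancel_left, norm_neg]; gcongr
  rw [← hmean] at hg_sq_int hvar
  have hsecond : ∫ ω, ‖g ω‖ ^ 2 ∂μ ≤ σ ^ 2 + ‖∫ ω, g ω ∂μ‖ ^ 2 := by
    rw [integral_norm_sq_eq_integral_norm_sub_sq_add hg_int hg_sq_int]
    linarith
  have hσ : 0 ≤ L * η ^ 2 * σ ^ 2 := by positivity
  calc ∫ ω, f (x - η • g ω) ∂μ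
      ≤ f x - η * ⟪gradient f x, ∫ ω, g ω ∂μ⟫ + L / 2 * η ^ 2 * ∫ ω, ‖g ω‖ ^ 2 ∂μ :=
        integral_comp_sub_smul_le hdiff hlip x η hg_int
          (integrable_norm_sq_of_integrable_norm_sub_sq hg_int _ hg_sq_int) hf_int
    _ ≤ f x - η * ⟪gradient f x, ∫ ω, g ω ∂μ⟫
          + L / 2 * η ^ 2 * (σ ^ 2 + ‖∫ ω, g ω ∂μ‖ ^ 2) := by gcongr
    _ ≤ f x - η / 2 * ‖gradient f x‖ ^ 2 + η / 2 * ‖gradient f x - ∫ ω, g ω ∂μ‖ ^ 2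
          + L / 2 * η ^ 2 * σ ^ 2 := by
        linarith [neg_mul_inner_add_mul_norm_sq_le (gradient f x) (∫ ω, g ω ∂μ) hη.le hLη]
    _ ≤ _ := by
        rw [hmean]
        linarith [mul_le_mul_of_nonneg_left hbias (by positivity : (0 : ℝ) ≤ η / 2)]
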